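/- Error between the iterated optimal stopping sequence and the penalized iteration: let c > 0 and ρ > 0, let (u^n)_{n≥0} be the iterated optimal stopping sequence and (u^{ρ,n})_{n≥0} the penalized iteration, both for switching cost c. Suppose there exist constants τ > 0 and σ > 0 such that π(y) ≥ τ·y^{1/σ} for all 0 ≤ y ≤ 2‖F(0)‖/γ. Then ‖u^n − u^{ρ,n}‖ ≤ (C/(τρ))^σ · n for all n ≥ 0, where C = sup over {v ∈ ℝ^{N×d} : ‖v‖ ≤ ‖F(0)‖/γ} of ‖F(v)‖. -/

import Mathlib

open Filter Topology

noncomputable section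

/-- A monotone system with constant `γ`: whenever `u i l - v i l` is the (nonnegative)
maximum of all differences, `F u i l - F v i l ≥ γ (u i l - v i l)`. -/
def IsMonotoneSystem {N d : ℕ} (γ : ℝ)
    (F : (Fin d → Fin N → ℝ) → Fin d → Fin N → ℝ) : Prop :=
  ∀ u v : Fin d → Fin N → ℝ, ∀ i : Fin d, ∀ l : Fin N,
    (∀ (j : Fin d) (k : Fin N), u j k - v j k ≤ u i l - v i l) →
    0 ≤ u i l - v i l →
    γ * (u i l - v i l) ≤ F u i l - F v i l

/-- The intervention operator `(M_i u)_l = max_{j ≠ i} (u j l - c)`. -/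
def Mop {N d : ℕ} (c : ℝ) (u : Fin d → Fin N → ℝ) (i : Fin d) (l : Fin N) : ℝ :=
  ⨆ j : {j : Fin d // j ≠ i}, (u j l - c)

/-- The sup-norm `‖u‖ = max_{i,l} |u i l|`. -/
def supNorm {N d : ℕ} (u : Fin d → Fin N → ℝ) : ℝ :=
  ⨆ p : Fin d × Fin N, |u p.1 p.2|

/-- A penalty function: continuous, non-decreasing, vanishing on `(-∞,0]` and
positive on `(0,∞)`. -/
def IsPenaltyFunction (π : ℝ → ℝ) : Prop :=
  Continuous π ∧ Monotone π ∧ (∀ y : ℝ, y ≤ 0 → π y = 0) ∧ (∀ y : ℝ, 0 < y → 0 < π y)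

/-- A concave system: each `F_i` is concave (componentwise). -/
def IsConcaveSystem {N d : ℕ}
    (F : (Fin d → Fin N → ℝ) → Fin d → Fin N → ℝ) : Prop :=
  ∀ (i : Fin d) (u v : Fin d → Fin N → ℝ) (θ : ℝ), 0 ≤ θ → θ ≤ 1 → ∀ l : Fin N,
    θ * F u i l + (1 - θ) * F v i l ≤ F (fun j k => θ * u j k + (1 - θ) * v j k) i l

/-!
Both sequences stay in the sup-norm ball of radius `K = ‖F(0)‖/γ`, by the maximum principle for
monotone systems, and the penalized iterates lie below the optimal stopping iterates. At a point
where `uⁿ⁺¹ - u^{ρ,n+1}` is maximal, either `F(uⁿ⁺¹)` vanishes there, which forces the gap to be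
nonpositive, or `uⁿ⁺¹ = uⁿ_j - c` for some `j`; then the gap exceeds the one at level `n` by at
most `y = u^{ρ,n}_j - c - u^{ρ,n+1}`, and `ρ π(y) ≤ F(u^{ρ,n+1}) ≤ F(uⁿ⁺¹) ≤ C` together with the
lower bound on `π` gives `y ≤ (C/(τρ))^σ`.
-/

section SupNorm

variable {N d : ℕ}

theorem supNorm_eq_norm (u : Fin d → Fin N → ℝ) : supNorm u = ‖u‖ := by
  have h : ∀ i l, |u i l| ≤ ‖u‖ := fun i l =>
    (norm_le_pi_norm (u i) l).trans (norm_le_pi_norm u i)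
  refine le_antisymm (Real.iSup_le (fun p => h p.1 p.2) (norm_nonneg u)) ?_
  have h0 : 0 ≤ supNorm u := Real.iSup_nonneg fun _ => abs_nonneg _
  refine (pi_norm_le_iff_of_nonneg h0).2 fun i => (pi_norm_le_iff_of_nonneg h0).2 fun l => ?_
  exact le_ciSup (f := fun p : Fin d × Fin N => |u p.1 p.2|) (Finite.bddAbove_range _) (i, l)

theorem supNorm_nonneg (u : Fin d → Fin N → ℝ) : 0 ≤ supNorm u := by
  rw [supNorm_eq_norm]
  exact norm_nonneg u

theorem abs_le_supNorm (u : Fin d → Fin N → ℝ) (i : Fin d) (l : Fin N) : |u i l| ≤ supNorm u := by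
  rw [supNorm_eq_norm]
  exact (norm_le_pi_norm (u i) l).trans (norm_le_pi_norm u i)

theorem supNorm_le_iff {u : Fin d → Fin N → ℝ} {M : ℝ} (hM : 0 ≤ M) :
    supNorm u ≤ M ↔ ∀ i l, |u i l| ≤ M := by
  simp only [supNorm_eq_norm, pi_norm_le_iff_of_nonneg hM, Real.norm_eq_abs]

theorem supNorm_apply_le_sSup {F : (Fin d → Fin N → ℝ) → Fin d → Fin N → ℝ} (hF : Continuous F)
    {K : ℝ} {v : Fin d → Fin N → ℝ} (hv : supNorm v ≤ K) :
    supNorm (F v) ≤ sSup ((fun v => supNorm (F v)) '' {v | supNorm v ≤ K}) := by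
  have hball : {v : Fin d → Fin N → ℝ | supNorm v ≤ K} = Metric.closedBall 0 K := by
    ext v
    simp only [Set.mem_ofPred_eq, supNorm_eq_norm, mem_closedBall_zero_iff]
  have hbdd : BddAbove ((fun v => supNorm (F v)) '' {v | supNorm v ≤ K}) := by
    rw [hball]
    simp only [supNorm_eq_norm]
    exact (isCompact_closedBall 0 K).bddAbove_image (continuous_norm.comp hF).continuousOn
  exact le_csSup hbdd ⟨v, hv, rfl⟩

theorem sub_le_of_forall_isMax {u v : Fin d → Fin N → ℝ} {M : ℝ} (hM : 0 ≤ M)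
    (h : ∀ i l, (∀ j k, u j k - v j k ≤ u i l - v i l) → 0 < u i l - v i l →
      u i l - v i l ≤ M)
    (i : Fin d) (l : Fin N) : u i l - v i l ≤ M := by
  have : Nonempty (Fin d × Fin N) := ⟨(i, l)⟩
  obtain ⟨⟨i₀, l₀⟩, hmax⟩ := Finite.exists_max fun p : Fin d × Fin N => u p.1 p.2 - v p.1 p.2
  have hmax' : ∀ j k, u j k - v j k ≤ u i₀ l₀ - v i₀ l₀ := fun j k => hmax (j, k)
  refine (hmax' i l).trans ?_
  rcases le_or_gt (u i₀ l₀ - v i₀ l₀) 0 with hle | hpos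
  · exact hle.trans hM
  · exact h i₀ l₀ hmax' hpos

end SupNorm

section Mop

variable {N d : ℕ} {c : ℝ} {u : Fin d → Fin N → ℝ} {i j : Fin d} {l : Fin N}

theorem sub_le_mop (hj : j ≠ i) : u j l - c ≤ Mop c u i l :=
  le_ciSup (f := fun j : {j : Fin d // j ≠ i} => u j l - c) (Finite.bddAbove_range _) ⟨j, hj⟩

theorem exists_mop_eq [Nontrivial (Fin d)] (c : ℝ) (u : Fin d → Fin N → ℝ) (i : Fin d)
    (l : Fin N) : ∃ j ≠ i, Mop c u i l = u j l - c := by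
  have : Nonempty {j : Fin d // j ≠ i} := nonempty_subtype.mpr (exists_ne i)
  obtain ⟨j, hj⟩ := Finite.exists_max fun j : {j : Fin d // j ≠ i} => u j l - c
  exact ⟨j, j.2, le_antisymm (ciSup_le hj) (sub_le_mop j.2)⟩

end Mop

namespace IsMonotoneSystem

variable {N d : ℕ} {γ : ℝ} {F : (Fin d → Fin N → ℝ) → Fin d → Fin N → ℝ}

theorem le_of_apply_le (hF : IsMonotoneSystem γ F) (hγ : 0 < γ) {u v : Fin d → Fin N → ℝ}
    (h : ∀ i l, F u i l ≤ F v i l) (i : Fin d) (l : Fin N) : u i l ≤ v i l := by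
  suffices u i l - v i l ≤ 0 by linarith
  refine sub_le_of_forall_isMax le_rfl (fun i l hmax hpos => ?_) i l
  have := hF u v i l hmax hpos.le
  nlinarith [h i l]

theorem apply_const_nonneg (hF : IsMonotoneSystem γ F) {K : ℝ} (hK : supNorm (F 0) ≤ γ * K)
    (hK₀ : 0 ≤ K) (i : Fin d) (l : Fin N) : 0 ≤ F (fun _ _ => K) i l := by
  have hmono := hF (fun _ _ => K) 0 i l (fun _ _ => by simp) (by simpa using hK₀)
  have hF0 := neg_le_of_abs_le (abs_le_supNorm (F 0) i l)
  simp only [Pi.zero_apply, sub_zero] at hmono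
  linarith

theorem apply_neg_const_nonpos (hF : IsMonotoneSystem γ F) {K : ℝ}
    (hK : supNorm (F 0) ≤ γ * K) (hK₀ : 0 ≤ K) (i : Fin d) (l : Fin N) :
    F (fun _ _ => -K) i l ≤ 0 := by
  have hmono := hF 0 (fun _ _ => -K) i l (fun _ _ => by simp) (by simpa using hK₀)
  have hF0 := le_of_abs_le (abs_le_supNorm (F 0) i l)
  simp only [Pi.zero_apply, zero_sub, neg_neg] at hmono
  linarith

theorem abs_le_of_apply_nonneg (hF : IsMonotoneSystem γ F) (hγ : 0 < γ) {K : ℝ}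
    (hK : supNorm (F 0) ≤ γ * K) {w : Fin d → Fin N → ℝ} (hw : ∀ i l, 0 ≤ F w i l)
    (hwK : ∀ i l, 0 < F w i l → w i l ≤ K) (i : Fin d) (l : Fin N) : |w i l| ≤ K := by
  have hK₀ : 0 ≤ K := nonneg_of_mul_nonneg_right ((supNorm_nonneg _).trans hK) hγ
  rw [abs_le]
  constructor
  · suffices -K - w i l ≤ 0 by linarith
    refine sub_le_of_forall_isMax (u := fun _ _ => -K) le_rfl (fun i l hmax hpos => ?_) i l
    have := hF _ w i l hmax hpos.le
    nlinarith [hw i l, hF.apply_neg_const_nonpos hK hK₀ i l]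
  · suffices w i l - K ≤ 0 by linarith
    refine sub_le_of_forall_isMax (v := fun _ _ => K) le_rfl (fun i l hmax hpos => ?_) i l
    have := hF w _ i l hmax hpos.le
    have hpos' : 0 < F w i l := by nlinarith [hF.apply_const_nonneg hK hK₀ i l]
    linarith [hwK i l hpos']

theorem abs_le_of_apply_eq_zero (hF : IsMonotoneSystem γ F) (hγ : 0 < γ) {K : ℝ}
    (hK : supNorm (F 0) ≤ γ * K) {w : Fin d → Fin N → ℝ} (hw : ∀ i l, F w i l = 0)
    (i : Fin d) (l : Fin N) : |w i l| ≤ K :=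
  hF.abs_le_of_apply_nonneg hγ hK (fun i l => (hw i l).ge) (fun i l h => absurd (hw i l) h.ne') i l

end IsMonotoneSystem

theorem IsPenaltyFunction.nonneg {π : ℝ → ℝ} (hπ : IsPenaltyFunction π) (y : ℝ) : 0 ≤ π y := by
  rcases le_or_gt y 0 with hy | hy
  · exact (hπ.2.2.1 y hy).ge
  · exact (hπ.2.2.2 y hy).le

theorem le_rpow_of_mul_rpow_one_div_le {y σ t C : ℝ} (hy : 0 ≤ y) (hσ : 0 < σ) (ht : 0 < t)
    (h : t * y ^ (1 / σ) ≤ C) : y ≤ (C / t) ^ σ := by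
  have hle : y ^ σ⁻¹ ≤ C / t := by
    rw [le_div_iff₀ ht, mul_comm, ← one_div]
    exact h
  exact (Real.rpow_inv_le_iff_of_pos hy ((Real.rpow_nonneg hy _).trans hle) hσ).1 hle

section Steps

variable {N d : ℕ}

def IsOptimalStoppingStep (F : (Fin d → Fin N → ℝ) → Fin d → Fin N → ℝ) (c : ℝ)
    (u w : Fin d → Fin N → ℝ) : Prop :=
  ∀ i l, min (F w i l) (w i l - Mop c u i l) = 0

def IsPenalizedStep (F : (Fin d → Fin N → ℝ) → Fin d → Fin N → ℝ) (π : ℝ → ℝ) (c ρ : ℝ)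
    (v w : Fin d → Fin N → ℝ) : Prop :=
  ∀ i l, F w i l - ρ * ∑ j ∈ Finset.univ.erase i, π (v j l - c - w i l) = 0

variable {γ c ρ : ℝ} {F : (Fin d → Fin N → ℝ) → Fin d → Fin N → ℝ} {π : ℝ → ℝ}
  {u v w w' : Fin d → Fin N → ℝ} {i : Fin d} {l : Fin N}

namespace IsOptimalStoppingStep

theorem apply_nonneg (h : IsOptimalStoppingStep F c u w) (i : Fin d) (l : Fin N) :
    0 ≤ F w i l :=
  (h i l).ge.trans (min_le_left _ _)

theorem mop_le (h : IsOptimalStoppingStep F c u w) (i : Fin d) (l : Fin N) :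
    Mop c u i l ≤ w i l :=
  sub_nonneg.1 ((h i l).ge.trans (min_le_right _ _))

theorem eq_mop_of_apply_pos (h : IsOptimalStoppingStep F c u w) (hpos : 0 < F w i l) :
    w i l = Mop c u i l := by
  rcases min_eq_iff.1 (h i l) with ⟨h0, -⟩ | ⟨h0, -⟩
  · exact absurd h0 hpos.ne'
  · linarith

theorem abs_le [Nontrivial (Fin d)] (h : IsOptimalStoppingStep F c u w)
    (hF : IsMonotoneSystem γ F) (hγ : 0 < γ) {K : ℝ} (hK : supNorm (F 0) ≤ γ * K) (hc : 0 ≤ c)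
    (hu : ∀ i l, |u i l| ≤ K) (i : Fin d) (l : Fin N) : |w i l| ≤ K := by
  refine hF.abs_le_of_apply_nonneg hγ hK h.apply_nonneg (fun i l hpos => ?_) i l
  obtain ⟨j, -, hj⟩ := exists_mop_eq c u i l
  rw [h.eq_mop_of_apply_pos hpos, hj]
  linarith [(_root_.abs_le.1 (hu j l)).2]

end IsOptimalStoppingStep

namespace IsPenalizedStep

theorem apply_eq (h : IsPenalizedStep F π c ρ v w) (i : Fin d) (l : Fin N) :
    F w i l = ρ * ∑ j ∈ Finset.univ.erase i, π (v j l - c - w i l) :=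
  sub_eq_zero.1 (h i l)

theorem apply_nonneg (h : IsPenalizedStep F π c ρ v w) (hπ : IsPenaltyFunction π) (hρ : 0 ≤ ρ)
    (i : Fin d) (l : Fin N) : 0 ≤ F w i l := by
  rw [h.apply_eq]
  exact mul_nonneg hρ (Finset.sum_nonneg fun _ _ => hπ.nonneg _)

theorem mul_penalty_le_apply (h : IsPenalizedStep F π c ρ v w) (hπ : IsPenaltyFunction π)
    (hρ : 0 ≤ ρ) {j : Fin d} (hj : j ≠ i) : ρ * π (v j l - c - w i l) ≤ F w i l := by
  rw [h.apply_eq]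
  refine mul_le_mul_of_nonneg_left ?_ hρ
  exact Finset.single_le_sum (f := fun j => π (v j l - c - w i l)) (fun _ _ => hπ.nonneg _)
    (Finset.mem_erase.2 ⟨hj, Finset.mem_univ j⟩)

theorem exists_lt_of_apply_pos (h : IsPenalizedStep F π c ρ v w) (hπ : IsPenaltyFunction π)
    (hpos : 0 < F w i l) : ∃ j ≠ i, w i l < v j l - c := by
  rw [h.apply_eq] at hpos
  obtain ⟨j, hj, hπj⟩ := Finset.exists_ne_zero_of_sum_ne_zero (right_ne_zero_of_mul hpos.ne')
  refine ⟨j, (Finset.mem_erase.1 hj).1, ?_⟩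
  by_contra! hle
  exact hπj (hπ.2.2.1 _ (by linarith))

theorem abs_le (h : IsPenalizedStep F π c ρ v w) (hπ : IsPenaltyFunction π) (hρ : 0 ≤ ρ)
    (hF : IsMonotoneSystem γ F) (hγ : 0 < γ) {K : ℝ} (hK : supNorm (F 0) ≤ γ * K) (hc : 0 ≤ c)
    (hv : ∀ i l, |v i l| ≤ K) (i : Fin d) (l : Fin N) : |w i l| ≤ K := by
  refine hF.abs_le_of_apply_nonneg hγ hK (h.apply_nonneg hπ hρ) (fun i l hpos => ?_) i l
  obtain ⟨j, -, hj⟩ := h.exists_lt_of_apply_pos hπ hpos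
  linarith [(_root_.abs_le.1 (hv j l)).2]

theorem le_of_isOptimalStoppingStep (h : IsPenalizedStep F π c ρ v w) (hπ : IsPenaltyFunction π)
    (hF : IsMonotoneSystem γ F) (hγ : 0 < γ) {u : Fin d → Fin N → ℝ}
    (hu : IsOptimalStoppingStep F c u w') (hvu : ∀ i l, v i l ≤ u i l) (i : Fin d) (l : Fin N) :
    w i l ≤ w' i l := by
  suffices w i l - w' i l ≤ 0 by linarith
  refine sub_le_of_forall_isMax le_rfl (fun i l hmax hpos => ?_) i l
  have hmono := hF w w' i l hmax hpos.le
  have hFpos : 0 < F w i l := by nlinarith [hu.apply_nonneg i l]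
  obtain ⟨j, hj, hlt⟩ := h.exists_lt_of_apply_pos hπ hFpos
  linarith [hvu j l, sub_le_mop (u := u) (c := c) (l := l) hj, hu.mop_le i l]

theorem le_rpow (h : IsPenalizedStep F π c ρ v w) (hπ : IsPenaltyFunction π) (hρ : 0 < ρ)
    {τ σ B C : ℝ} (hτ : 0 < τ) (hσ : 0 < σ)
    (hπlow : ∀ y : ℝ, 0 ≤ y → y ≤ B → τ * y ^ (1 / σ) ≤ π y) {j : Fin d} (hj : j ≠ i)
    (hB : v j l - c - w i l ≤ B) (hC : F w i l ≤ C) :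
    v j l - c - w i l ≤ (C / (τ * ρ)) ^ σ := by
  have hρπ := h.mul_penalty_le_apply (l := l) hπ hρ.le hj
  rcases le_or_gt (v j l - c - w i l) 0 with hy | hy
  · have hC₀ : 0 ≤ C := (h.apply_nonneg hπ hρ.le i l).trans hC
    exact hy.trans (Real.rpow_nonneg (div_nonneg hC₀ (by positivity)) σ)
  · refine le_rpow_of_mul_rpow_one_div_le hy.le hσ (by positivity) ?_
    nlinarith [hπlow _ hy.le hB]

end IsPenalizedStep

theorem IsOptimalStoppingStep.sub_le_add [Nontrivial (Fin d)]
    (hu : IsOptimalStoppingStep F c u w') (hv : IsPenalizedStep F π c ρ v w)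
    (hF : IsMonotoneSystem γ F) (hγ : 0 < γ) (hπ : IsPenaltyFunction π) (hρ : 0 < ρ)
    {τ σ K C e : ℝ} (hτ : 0 < τ) (hσ : 0 < σ) (hc : 0 ≤ c)
    (hπlow : ∀ y : ℝ, 0 ≤ y → y ≤ 2 * K → τ * y ^ (1 / σ) ≤ π y)
    (hvK : ∀ i l, |v i l| ≤ K) (hwK : ∀ i l, |w i l| ≤ K) (hC : ∀ i l, F w' i l ≤ C)
    (he : 0 ≤ e) (hgap : ∀ i l, u i l - v i l ≤ e) (i : Fin d) (l : Fin N) :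
    w' i l - w i l ≤ e + (C / (τ * ρ)) ^ σ := by
  have hC₀ : 0 ≤ C := (hu.apply_nonneg i l).trans (hC i l)
  have hE : 0 ≤ (C / (τ * ρ)) ^ σ := Real.rpow_nonneg (div_nonneg hC₀ (by positivity)) σ
  refine sub_le_of_forall_isMax (add_nonneg he hE) (fun i l hmax hpos => ?_) i l
  have hmono := hF w' w i l hmax hpos.le
  have hFw := hv.apply_nonneg hπ hρ.le i l
  -- at a positive maximum of `w' - w` the monotonicity of `F` forces `w'` onto the obstacle
  have hFpos : 0 < F w' i l := by nlinarith
  obtain ⟨j, hj, hmop⟩ := exists_mop_eq c u i l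
  have hy := hv.le_rpow (C := C) hπ hρ hτ hσ hπlow hj
    (by linarith [(_root_.abs_le.1 (hvK j l)).2, (_root_.abs_le.1 (hwK i l)).1])
    (by nlinarith [hC i l])
  linarith [hu.eq_mop_of_apply_pos hFpos, hgap j l]

end Steps

section Iterations

variable {N d : ℕ} {γ c ρ : ℝ} {F : (Fin d → Fin N → ℝ) → Fin d → Fin N → ℝ} {π : ℝ → ℝ}
  {U V : ℕ → Fin d → Fin N → ℝ} {K : ℝ}

theorem abs_le_of_isOptimalStoppingStep [Nontrivial (Fin d)] (hF : IsMonotoneSystem γ F)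
    (hγ : 0 < γ) (hK : supNorm (F 0) ≤ γ * K) (hc : 0 ≤ c) (hU0 : ∀ i l, F (U 0) i l = 0)
    (hU : ∀ m, IsOptimalStoppingStep F c (U m) (U (m + 1))) (n : ℕ) :
    ∀ i l, |U n i l| ≤ K := by
  induction n with
  | zero => exact hF.abs_le_of_apply_eq_zero hγ hK hU0
  | succ m ih => exact (hU m).abs_le hF hγ hK hc ih

theorem abs_le_of_isPenalizedStep (hF : IsMonotoneSystem γ F) (hγ : 0 < γ)
    (hπ : IsPenaltyFunction π) (hρ : 0 ≤ ρ) (hK : supNorm (F 0) ≤ γ * K) (hc : 0 ≤ c)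
    (hV0 : ∀ i l, F (V 0) i l = 0) (hV : ∀ m, IsPenalizedStep F π c ρ (V m) (V (m + 1)))
    (n : ℕ) : ∀ i l, |V n i l| ≤ K := by
  induction n with
  | zero => exact hF.abs_le_of_apply_eq_zero hγ hK hV0
  | succ m ih => exact (hV m).abs_le hπ hρ hF hγ hK hc ih

theorem penalized_le_optimalStopping (hF : IsMonotoneSystem γ F) (hγ : 0 < γ)
    (hπ : IsPenaltyFunction π) (hU0 : ∀ i l, F (U 0) i l = 0)
    (hU : ∀ m, IsOptimalStoppingStep F c (U m) (U (m + 1))) (hV0 : ∀ i l, F (V 0) i l = 0)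
    (hV : ∀ m, IsPenalizedStep F π c ρ (V m) (V (m + 1))) (n : ℕ) :
    ∀ i l, V n i l ≤ U n i l := by
  induction n with
  | zero => exact hF.le_of_apply_le hγ fun i l => by rw [hV0, hU0]
  | succ m ih => exact (hV m).le_of_isOptimalStoppingStep hπ hF hγ (hU m) ih

theorem optimalStopping_sub_penalized_le [Nontrivial (Fin d)] (hF : IsMonotoneSystem γ F)
    (hγ : 0 < γ) (hπ : IsPenaltyFunction π) (hρ : 0 < ρ) {τ σ C : ℝ} (hτ : 0 < τ) (hσ : 0 < σ)
    (hc : 0 ≤ c) (hπlow : ∀ y : ℝ, 0 ≤ y → y ≤ 2 * K → τ * y ^ (1 / σ) ≤ π y)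
    (hU0 : ∀ i l, F (U 0) i l = 0) (hU : ∀ m, IsOptimalStoppingStep F c (U m) (U (m + 1)))
    (hV0 : ∀ i l, F (V 0) i l = 0) (hV : ∀ m, IsPenalizedStep F π c ρ (V m) (V (m + 1)))
    (hVK : ∀ n i l, |V n i l| ≤ K) (hC : ∀ n i l, F (U (n + 1)) i l ≤ C) (hC₀ : 0 ≤ C)
    (n : ℕ) : ∀ i l, U n i l - V n i l ≤ (C / (τ * ρ)) ^ σ * n := by
  induction n with
  | zero => simpa using hF.le_of_apply_le hγ fun i l => by rw [hU0, hV0]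
  | succ m ih =>
    intro i l
    have := (hU m).sub_le_add (hV m) hF hγ hπ hρ hτ hσ hc hπlow (hVK m) (hVK (m + 1)) (hC m)
      (by positivity) ih i l
    push_cast
    linarith

end Iterations

theorem iterated_vs_penalized_iteration_error_general {N d : ℕ} (hd : 2 ≤ d)
    (γ : ℝ) (hγ : 0 < γ)
    (F : (Fin d → Fin N → ℝ) → Fin d → Fin N → ℝ)
    (hFcont : Continuous F) (hFmono : IsMonotoneSystem γ F)
    (π : ℝ → ℝ) (hπ : IsPenaltyFunction π)
    (c : ℝ) (hc : 0 < c) (ρ : ℝ) (hρ : 0 < ρ)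
    (U : ℕ → Fin d → Fin N → ℝ)
    (hU0 : ∀ i l, F (U 0) i l = 0)
    (hUn : ∀ m : ℕ, ∀ i l, min (F (U (m + 1)) i l) (U (m + 1) i l - Mop c (U m) i l) = 0)
    (V : ℕ → Fin d → Fin N → ℝ)
    (hV0 : ∀ i l, F (V 0) i l = 0)
    (hVn : ∀ n : ℕ, ∀ i l, F (V (n + 1)) i l -
      ρ * ∑ j ∈ Finset.univ.erase i, π (V n j l - c - V (n + 1) i l) = 0)
    (τ σ : ℝ) (hτ : 0 < τ) (hσ : 0 < σ)
    (hπlow : ∀ y : ℝ, 0 ≤ y → y ≤ 2 * supNorm (F 0) / γ → τ * y ^ (1 / σ) ≤ π y) :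
    ∀ n : ℕ,
      supNorm (fun i l => U n i l - V n i l) ≤
        (sSup ((fun v => supNorm (F v)) '' {v | supNorm v ≤ supNorm (F 0) / γ}) / (τ * ρ)) ^ σ
          * n := by
  have : Nontrivial (Fin d) := Fin.nontrivial_iff_two_le.mpr hd
  set K := supNorm (F 0) / γ
  set C := sSup ((fun v => supNorm (F v)) '' {v | supNorm v ≤ K})
  have hK : supNorm (F 0) ≤ γ * K := (mul_div_cancel₀ _ hγ.ne').ge
  have hK₀ : 0 ≤ K := div_nonneg (supNorm_nonneg _) hγ.le
  have hC₀ : 0 ≤ C := (supNorm_nonneg _).trans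
    (supNorm_apply_le_sSup hFcont (by rwa [supNorm_eq_norm, norm_zero]))
  have hUK := abs_le_of_isOptimalStoppingStep hFmono hγ hK hc.le hU0 hUn
  have hVK := abs_le_of_isPenalizedStep hFmono hγ hπ hρ.le hK hc.le hV0 hVn
  have hC : ∀ n i l, F (U (n + 1)) i l ≤ C := fun n i l =>
    (le_abs_self _).trans ((abs_le_supNorm _ i l).trans
      (supNorm_apply_le_sSup hFcont ((supNorm_le_iff hK₀).2 (hUK (n + 1)))))
  have hgap := optimalStopping_sub_penalized_le hFmono hγ hπ hρ hτ hσ hc.le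
    (by simpa only [mul_div_assoc] using hπlow) hU0 hUn hV0 hVn hVK hC hC₀
  have hVU := penalized_le_optimalStopping hFmono hγ hπ hU0 hUn hV0 hVn
  intro n
  refine (supNorm_le_iff (by positivity)).2 fun i l => ?_
  rw [abs_of_nonneg (sub_nonneg.2 (hVU n i l))]
  exact hgap n i l

/-- Error between the iterated optimal stopping sequence and the penalized iteration. -/
theorem iterated_vs_penalized_iteration_error {N d : ℕ} (hN : 1 ≤ N) (hd : 2 ≤ d)
    (γ : ℝ) (hγ : 0 < γ)
    (F : (Fin d → Fin N → ℝ) → Fin d → Fin N → ℝ)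
    (hFcont : Continuous F) (hFmono : IsMonotoneSystem γ F)
    (π : ℝ → ℝ) (hπ : IsPenaltyFunction π)
    (c : ℝ) (hc : 0 < c) (ρ : ℝ) (hρ : 0 < ρ)
    (U : ℕ → Fin d → Fin N → ℝ)
    (hU0 : ∀ i l, F (U 0) i l = 0)
    (hUn : ∀ m : ℕ, ∀ i l, min (F (U (m + 1)) i l) (U (m + 1) i l - Mop c (U m) i l) = 0)
    (V : ℕ → Fin d → Fin N → ℝ)
    (hV0 : ∀ i l, F (V 0) i l = 0)
    (hVn : ∀ n : ℕ, ∀ i l, F (V (n + 1)) i l -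
      ρ * ∑ j ∈ Finset.univ.erase i, π (V n j l - c - V (n + 1) i l) = 0)
    (τ σ : ℝ) (hτ : 0 < τ) (hσ : 0 < σ)
    (hπlow : ∀ y : ℝ, 0 ≤ y → y ≤ 2 * supNorm (F 0) / γ → τ * y ^ (1 / σ) ≤ π y) :
    ∀ n : ℕ,
      supNorm (fun i l => U n i l - V n i l) ≤
        (sSup ((fun v => supNorm (F v)) '' {v | supNorm v ≤ supNorm (F 0) / γ}) / (τ * ρ)) ^ σ
          * n :=
  iterated_vs_penalized_iteration_error_general hd γ hγ F hFcont hFmono π hπ c hc ρ hρ U hU0 hUn V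
    hV0 hVn τ σ hτ hσ hπlow
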